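/- arXiv:1305.5186 — 2 statements merged into one kernel-verified Lean document; each statement's English description precedes it below -/
import Mathlib

section
/- Let b > a be real numbers and Q : ℕ × ℕ → [a,b] a function such that (1) lim_{n→∞} Q(n,0) = a, (2) for each fixed n, lim_{m→∞} Q(n,m) = b, and (3) for every ε > 0 there is N such that for all n ≥ N and all m, Q(n,m+1) < Q(n,m) + ε. Then for every q ∈ [a,b] there exist strictly increasing sequences (n_k) and (m_k) of natural numbers with lim_{k→∞} Q(n_k, m_k) = q. -/
/-!
Fix a target `q ∈ [a, b]`, a tolerance `δ` and a column bound `m₀`. Choose `ε ≤ δ / (m₀ + 2)`.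
For large `n` the row `m ↦ Q n m` starts below `a + ε` and climbs by less than `ε` per step, so
it is still below `a + δ ≤ q + δ` at `m₀ + 1`; since it tends to `b ≥ q`, it must afterwards
enter `(q - δ, q + δ)`, which is wider than one step. Hence `q` is a cluster point of `Q` along
`atTop ×ˢ atTop`, and in `ℕ × ℕ` such a cluster point is the limit along indices that increase
strictly in both coordinates.
-/

open Filter Topology

section SmallSteps

variable {α : Type*} [AddCommGroup α] [LinearOrder α] [IsOrderedAddMonoid α]
  {u : ℕ → α} {ε : α}

theorem le_add_nsmul_of_forall_succ_le_add (hstep : ∀ m, u (m + 1) ≤ u m + ε) (m : ℕ) :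
    u m ≤ u 0 + m • ε := by
  induction m with
  | zero => simp
  | succ m ih => rw [succ_nsmul, ← add_assoc]; exact (hstep m).trans (by gcongr)

theorem exists_ge_mem_Ioo_of_forall_succ_lt_add (hstep : ∀ m, u (m + 1) < u m + ε) {c : α}
    {m₀ : ℕ} (hstart : u m₀ < c + ε) (hcross : ∃ m ≥ m₀, c < u m) :
    ∃ m ≥ m₀, u m ∈ Set.Ioo c (c + ε) := by
  obtain ⟨m, hm₀, hcm⟩ := hcross
  induction m, hm₀ using Nat.le_induction with
  | base => exact ⟨m₀, le_rfl, hcm, hstart⟩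
  | succ m hm₀ ih =>
    by_cases hc : c < u m
    · exact ih hc
    · exact ⟨m + 1, hm₀.trans m.le_succ, hcm, (hstep m).trans_le (by gcongr; exact not_lt.mp hc)⟩

end SmallSteps

theorem mapClusterPt_uncurry_of_eventually_exists_dist_lt {X : Type*} [PseudoMetricSpace X]
    {u : ℕ → ℕ → X} {x : X}
    (h : ∀ δ > 0, ∀ m₀, ∀ᶠ n in atTop, ∃ m > m₀, dist (u n m) x < δ) :
    MapClusterPt x (atTop ×ˢ atTop) (Function.uncurry u) := by
  refine (Metric.nhds_basis_ball.mapClusterPt_iff_frequently).mpr fun δ hδ => ?_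
  rw [prod_atTop_atTop_eq, frequently_atTop]
  rintro ⟨n₀, m₀⟩
  obtain ⟨n, hn₀, m, hm₀, hm⟩ := ((eventually_ge_atTop n₀).and (h δ hδ m₀)).exists
  exact ⟨(n, m), ⟨hn₀, hm₀.le⟩, hm⟩

theorem MapClusterPt.exists_strictMono_strictMono_tendsto {X : Type*} [TopologicalSpace X]
    [FirstCountableTopology X] {u : ℕ → ℕ → X} {x : X}
    (hx : MapClusterPt x (atTop ×ˢ atTop) (Function.uncurry u)) :
    ∃ φ ψ : ℕ → ℕ, StrictMono φ ∧ StrictMono ψ ∧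
      Tendsto (fun k => u (φ k) (ψ k)) atTop (𝓝 x) := by
  obtain ⟨p, hpx, hp⟩ := hx.exists_seq_tendsto
  rw [tendsto_prod_iff'] at hp
  obtain ⟨σ, hσ, hσ₁⟩ := strictMono_subseq_of_tendsto_atTop hp.1
  obtain ⟨τ, hτ, hτ₂⟩ := strictMono_subseq_of_tendsto_atTop (hp.2.comp hσ.tendsto_atTop)
  exact ⟨fun k => (p (σ (τ k))).1, fun k => (p (σ (τ k))).2, hσ₁.comp hτ, hτ₂,
    hpx.comp (hσ.comp hτ).tendsto_atTop⟩

theorem eventually_exists_gt_dist_lt {a b q : ℝ} {Q : ℕ → ℕ → ℝ}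
    (h1 : Tendsto (fun n => Q n 0) atTop (𝓝 a))
    (h2 : ∀ n, Tendsto (fun m => Q n m) atTop (𝓝 b))
    (h3 : ∀ ε > (0:ℝ), ∃ N : ℕ, ∀ n ≥ N, ∀ m : ℕ, Q n (m + 1) < Q n m + ε)
    (hq : q ∈ Set.Icc a b) {δ : ℝ} (hδ : 0 < δ) (m₀ : ℕ) :
    ∀ᶠ n in atTop, ∃ m > m₀, dist (Q n m) q < δ := by
  set ε := δ / (m₀ + 2)
  have hε : 0 < ε := by positivity
  have hεδ : (m₀ + 2) * ε = δ := mul_div_cancel₀ δ (by positivity)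
  obtain ⟨N, hN⟩ := h3 ε hε
  filter_upwards [eventually_ge_atTop N, h1.eventually_lt_const (by linarith : a < a + ε)]
    with n hnN hn0
  have hstep : ∀ m, Q n (m + 1) < Q n m + 2 * δ := fun m =>
    (hN n hnN m).trans_le (by nlinarith)
  have hstart : Q n (m₀ + 1) < q - δ + 2 * δ := by
    have := le_add_nsmul_of_forall_succ_le_add (fun m => (hN n hnN m).le) (m₀ + 1)
    push_cast [nsmul_eq_mul] at this
    linarith [hq.1]
  have hcross : ∃ m ≥ m₀ + 1, q - δ < Q n m :=
    (((h2 n).eventually_const_lt (by linarith [hq.2])).and (eventually_ge_atTop _)).exists.imp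
      fun m hm => ⟨hm.2, hm.1⟩
  obtain ⟨m, hm₀, hlo, hhi⟩ := exists_ge_mem_Ioo_of_forall_succ_lt_add hstep hstart hcross
  exact ⟨m, hm₀, abs_sub_lt_iff.mpr ⟨by linarith, by linarith⟩⟩

theorem double_sequence_intermediate_limits_general
    (a b : ℝ) (Q : ℕ → ℕ → ℝ)
    (h1 : Tendsto (fun n => Q n 0) atTop (nhds a))
    (h2 : ∀ n, Tendsto (fun m => Q n m) atTop (nhds b))
    (h3 : ∀ ε > (0:ℝ), ∃ N : ℕ, ∀ n ≥ N, ∀ m : ℕ, Q n (m + 1) < Q n m + ε) :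
    ∀ q ∈ Set.Icc a b, ∃ nk mk : ℕ → ℕ, StrictMono nk ∧ StrictMono mk ∧
      Tendsto (fun k => Q (nk k) (mk k)) atTop (nhds q) := fun _ hq =>
  (mapClusterPt_uncurry_of_eventually_exists_dist_lt fun _ hδ m₀ =>
    eventually_exists_gt_dist_lt h1 h2 h3 hq hδ m₀).exists_strictMono_strictMono_tendsto

/-- double-sequence intermediate value lemma. -/
theorem double_sequence_intermediate_limits
    (a b : ℝ) (hab : a < b) (Q : ℕ → ℕ → ℝ)
    (hrange : ∀ n m, Q n m ∈ Set.Icc a b)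
    (h1 : Tendsto (fun n => Q n 0) atTop (nhds a))
    (h2 : ∀ n, Tendsto (fun m => Q n m) atTop (nhds b))
    (h3 : ∀ ε > (0:ℝ), ∃ N : ℕ, ∀ n ≥ N, ∀ m : ℕ, Q n (m + 1) < Q n m + ε) :
    ∀ q ∈ Set.Icc a b, ∃ nk mk : ℕ → ℕ, StrictMono nk ∧ StrictMono mk ∧
      Tendsto (fun k => Q (nk k) (mk k)) atTop (nhds q) :=
  double_sequence_intermediate_limits_general a b Q h1 h2 h3
end

section
/- Let X be a geodesic δ-hyperbolic space. There exist constants K and R depending only on δ such that the following holds: let α and β be geodesic lines in X neither of which enters the K-neighborhood of the other, and let p ∈ α, q ∈ β be points minimizing the distance between α and β. If x is a point with dist(x, α) ≤ δ and y a point with dist(y, β) ≤ δ, then any geodesic segment [x,y] passes within distance R of both p and q. -/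
/-!
Join `x` to `p`, `p` to `q` and `y` to `q` by geodesics. Slim triangles put `[x, p]` within
`2δ` of `α` and `[y, q]` within `2δ` of `β`, and every point of `[x, y]` within `2δ` of one of
the three sides `[x, p]`, `[p, q]`, `[y, q]`. Since `α` and `β` are far apart, no point is close
to both `[x, p]` and `[y, q]`, so by connectedness `[x, y]` has a point close to both `[x, p]`
and `[p, q]`. On `[p, q]` the distance to `p` is at most the distance to `α`, because `p` is
the point of `α` closest to `q`; near `[x, p]` the distance to `α` is small, hence so is the
distance to `p`. The statement about `q` is the same one with the roles of the lines swapped.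
-/

open Metric Set Filter

/-- `γ` is a unit-speed geodesic on the set `I ⊆ ℝ`. -/
def IsGeodOn {X : Type*} [MetricSpace X] (γ : ℝ → X) (I : Set ℝ) : Prop :=
  ∀ s ∈ I, ∀ t ∈ I, dist (γ s) (γ t) = |s - t|

/-- `γ` is a unit-speed geodesic from `x` to `y`, parameterized on `[0, dist x y]`. -/
def IsGeodFromTo {X : Type*} [MetricSpace X] (γ : ℝ → X) (x y : X) : Prop :=
  γ 0 = x ∧ γ (dist x y) = y ∧ IsGeodOn γ (Set.Icc 0 (dist x y))

/-- A geodesic metric space: any two points are joined by a geodesic. -/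
def GeodesicSpace (X : Type*) [MetricSpace X] : Prop :=
  ∀ x y : X, ∃ γ : ℝ → X, IsGeodFromTo γ x y

/-- `X` is `δ`-hyperbolic in the thin-triangles sense: every side of every geodesic
triangle lies in the `δ`-neighborhood of the union of the other two sides. -/
def SlimTriangles (X : Type*) [MetricSpace X] (δ : ℝ) : Prop :=
  ∀ x y z : X, ∀ γ₁ γ₂ γ₃ : ℝ → X,
    IsGeodFromTo γ₁ x y → IsGeodFromTo γ₂ y z → IsGeodFromTo γ₃ z x →
    ∀ t ∈ Set.Icc (0:ℝ) (dist x y),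
      Metric.infDist (γ₁ t)
        (γ₂ '' Set.Icc 0 (dist y z) ∪ γ₃ '' Set.Icc 0 (dist z x)) ≤ δ

variable {X : Type*} [MetricSpace X]

theorem LipschitzWith.le_add_mul_infDist {f : X → ℝ} {K : NNReal} (hf : LipschitzWith K f)
    {S : Set X} (hS : S.Nonempty) {c : ℝ} (hc : ∀ s ∈ S, f s ≤ c) (z : X) :
    f z ≤ c + K * infDist z S := by
  have key : ∀ s : S, f z - c ≤ K * dist z s := fun s => by
    have := (le_abs_self _).trans (hf.dist_le_mul z s)
    linarith [hc s s.2]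
  have := hS.to_subtype
  rw [infDist_eq_iInf, Real.mul_iInf_of_nonneg (NNReal.coe_nonneg K)]
  linarith [le_ciInf key]

theorem le_infDist_add_infDist {A B : Set X} (hA : A.Nonempty) {c : ℝ}
    (h : ∀ a ∈ A, c ≤ infDist a B) (w : X) : c ≤ infDist w A + infDist w B := by
  have : c - infDist w B ≤ infDist w A := (le_infDist hA).2 fun a ha => by
    linarith [h a ha, infDist_le_infDist_add_dist (x := a) (y := w) (s := B), dist_comm a w]
  linarith

theorem dist_le_infDist_of_forall_dist_le {p q z : X} {A : Set X} (hA : A.Nonempty)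
    (hp : ∀ a ∈ A, dist p q ≤ dist a q) (hz : dist p z + dist z q = dist p q) :
    dist z p ≤ infDist z A :=
  (le_infDist hA).2 fun a ha => by
    linarith [hp a ha, dist_triangle a z q, dist_comm p z, dist_comm a z]

theorem exists_infDist_le_of_cover {γ : ℝ → X} {a b : ℝ} (hab : a ≤ b)
    (hγ : ContinuousOn γ (Icc a b)) {S₁ S₂ S₃ : Set X} {r : ℝ}
    (hcover : ∀ t ∈ Icc a b,
      infDist (γ t) S₁ ≤ r ∨ infDist (γ t) S₂ ≤ r ∨ infDist (γ t) S₃ ≤ r)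
    (ha : infDist (γ a) S₁ ≤ r) (hb : infDist (γ b) S₃ ≤ r)
    (hdisj : ∀ w, infDist w S₁ ≤ r → r < infDist w S₃) :
    ∃ t ∈ Icc a b, infDist (γ t) S₁ ≤ r ∧ infDist (γ t) S₂ ≤ r := by
  let near (S : Set X) : Set ℝ := Icc a b ∩ (fun t => infDist (γ t) S) ⁻¹' Iic r
  have hclosed (S : Set X) : IsClosed (near S) :=
    ((continuous_infDist_pt S).comp_continuousOn hγ).preimage_isClosed_of_isClosed
      isClosed_Icc isClosed_Iic
  obtain ⟨t, ht, ht₁, ht₂ | ht₃⟩ := isPreconnected_closed_iff.1 isPreconnected_Icc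
    (near S₁) (near S₂ ∪ near S₃) (hclosed _) ((hclosed _).union (hclosed _))
    (fun t ht => (hcover t ht).imp (⟨ht, ·⟩) (Or.imp (⟨ht, ·⟩) (⟨ht, ·⟩)))
    ⟨a, left_mem_Icc.2 hab, left_mem_Icc.2 hab, ha⟩
    ⟨b, right_mem_Icc.2 hab, Or.inr ⟨right_mem_Icc.2 hab, hb⟩⟩
  · exact ⟨t, ht, ht₁.2, ht₂.2⟩
  · exact ((hdisj _ ht₁.2).not_ge ht₃.2).elim

namespace IsGeodFromTo

variable {γ : ℝ → X} {x y : X} {t : ℝ}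

theorem dist_left (hγ : IsGeodFromTo γ x y) (ht : t ∈ Icc 0 (dist x y)) :
    dist (γ t) x = t := by
  obtain ⟨h₀, -, hg⟩ := hγ
  rw [← h₀, hg t ht 0 (left_mem_Icc.2 dist_nonneg), sub_zero, abs_of_nonneg ht.1]

theorem dist_right (hγ : IsGeodFromTo γ x y) (ht : t ∈ Icc 0 (dist x y)) :
    dist (γ t) y = dist x y - t := by
  obtain ⟨-, h₁, hg⟩ := hγ
  have := hg t ht _ (right_mem_Icc.2 dist_nonneg)
  rw [h₁] at this
  rw [this, abs_of_nonpos (by linarith [ht.2]), neg_sub]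

theorem dist_add_dist (hγ : IsGeodFromTo γ x y) (ht : t ∈ Icc 0 (dist x y)) :
    dist x (γ t) + dist (γ t) y = dist x y := by
  rw [dist_comm, hγ.dist_left ht, hγ.dist_right ht, add_sub_cancel]

theorem left_mem_image (hγ : IsGeodFromTo γ x y) : x ∈ γ '' Icc 0 (dist x y) :=
  ⟨0, left_mem_Icc.2 dist_nonneg, hγ.1⟩

theorem continuousOn (hγ : IsGeodFromTo γ x y) : ContinuousOn γ (Icc 0 (dist x y)) :=
  (LipschitzOnWith.of_dist_le_mul (K := 1) fun s hs t ht => by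
    rw [hγ.2.2 s hs t ht, NNReal.coe_one, one_mul, Real.dist_eq]).continuousOn

theorem reverse (hγ : IsGeodFromTo γ x y) : IsGeodFromTo (fun t => γ (dist x y - t)) y x := by
  obtain ⟨h₀, h₁, hg⟩ := hγ
  have hmem : ∀ t ∈ Icc 0 (dist y x), dist x y - t ∈ Icc 0 (dist x y) := fun t ht => by
    rw [dist_comm] at ht
    exact ⟨by linarith [ht.2], by linarith [ht.1]⟩
  refine ⟨by simpa using h₁, by simpa [dist_comm] using h₀, fun s hs t ht => ?_⟩
  rw [hg _ (hmem s hs) _ (hmem t ht), show dist x y - s - (dist x y - t) = t - s by ring,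
    abs_sub_comm]

end IsGeodFromTo

theorem Isometry.exists_isGeodFromTo {α : ℝ → X} (hα : Isometry α) (s₀ s₁ : ℝ) :
    ∃ g : ℝ → X, IsGeodFromTo g (α s₀) (α s₁) ∧ ∀ u, g u ∈ range α := by
  have hd := hα.dist_eq s₀ s₁
  rw [Real.dist_eq] at hd
  rcases le_total s₀ s₁ with h | h
  · refine ⟨fun u => α (s₀ + u), ⟨by simp, ?_, fun u _ v _ => ?_⟩, fun u => mem_range_self _⟩
    · dsimp only
      rw [hd, abs_of_nonpos (by linarith), neg_sub, add_sub_cancel]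
    · rw [hα.dist_eq, Real.dist_eq, add_sub_add_left_eq_sub]
  · refine ⟨fun u => α (s₀ - u), ⟨by simp, ?_, fun u _ v _ => ?_⟩, fun u => mem_range_self _⟩
    · dsimp only
      rw [hd, abs_of_nonneg (by linarith), sub_sub_cancel]
    · rw [hα.dist_eq, Real.dist_eq, sub_sub_sub_cancel_left, abs_sub_comm]

namespace SlimTriangles

variable {δ : ℝ}

theorem le_add_of_le_on_sides (hX : SlimTriangles X δ) {f : X → ℝ} (hf : LipschitzWith 1 f)
    {x y z : X} {γ₁ γ₂ γ₃ : ℝ → X} (h₁ : IsGeodFromTo γ₁ x y) (h₂ : IsGeodFromTo γ₂ y z)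
    (h₃ : IsGeodFromTo γ₃ z x) {c : ℝ} (hc₂ : ∀ t ∈ Icc 0 (dist y z), f (γ₂ t) ≤ c)
    (hc₃ : ∀ t ∈ Icc 0 (dist z x), f (γ₃ t) ≤ c) {t : ℝ} (ht : t ∈ Icc 0 (dist x y)) :
    f (γ₁ t) ≤ c + δ := by
  have := hf.le_add_mul_infDist (S := γ₂ '' Icc 0 (dist y z) ∪ γ₃ '' Icc 0 (dist z x))
    ⟨y, Or.inl h₂.left_mem_image⟩
    (by rintro _ (⟨u, hu, rfl⟩ | ⟨u, hu, rfl⟩); exacts [hc₂ u hu, hc₃ u hu]) (γ₁ t)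
  rw [NNReal.coe_one, one_mul] at this
  linarith [hX x y z γ₁ γ₂ γ₃ h₁ h₂ h₃ t ht]

theorem infDist_range_le (hX : SlimTriangles X δ) (hgeo : GeodesicSpace X) {α g : ℝ → X}
    (hα : Isometry α) {x : X} {s : ℝ} (hg : IsGeodFromTo g x (α s)) {u : ℝ}
    (hu : u ∈ Icc 0 (dist x (α s))) :
    infDist (g u) (range α) ≤ infDist x (range α) + δ := by
  suffices infDist (g u) (range α) - δ ≤ infDist x (range α) by linarith
  refine (le_infDist (range_nonempty α)).2 ?_
  rintro _ ⟨s₁, rfl⟩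
  obtain ⟨l, hl, hlα⟩ := hα.exists_isGeodFromTo s s₁
  obtain ⟨h, hh⟩ := hgeo (α s₁) x
  have := hX.le_add_of_le_on_sides (lipschitz_infDist_pt _) hg hl hh (c := dist x (α s₁))
    (fun v _ => (infDist_zero_of_mem (hlα v)).trans_le dist_nonneg)
    (fun v hv => (infDist_le_dist_of_mem (mem_range_self s₁)).trans <| by
      rw [hh.dist_left hv, dist_comm]; exact hv.2) hu
  linarith

theorem infDist_range_le_add (hX : SlimTriangles X δ) (hgeo : GeodesicSpace X) {α g : ℝ → X}
    (hα : Isometry α) {x : X} {s : ℝ} (hg : IsGeodFromTo g x (α s)) (w : X) :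
    infDist w (range α) ≤
      infDist x (range α) + δ + infDist w (g '' Icc 0 (dist x (α s))) := by
  have := (lipschitz_infDist_pt (range α)).le_add_mul_infDist ⟨_, hg.left_mem_image⟩
    (by rintro _ ⟨u, hu, rfl⟩; exact hX.infDist_range_le hgeo hα hg hu) w
  rwa [NNReal.coe_one, one_mul] at this

theorem infDist_le_of_quadrilateral (hX : SlimTriangles X δ) (hgeo : GeodesicSpace X) (hδ : 0 ≤ δ)
    {x y p q : X} {γ gxp gpq gyq : ℝ → X} (hγ : IsGeodFromTo γ x y)
    (hxp : IsGeodFromTo gxp x p) (hpq : IsGeodFromTo gpq p q) (hyq : IsGeodFromTo gyq y q)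
    {t : ℝ} (ht : t ∈ Icc 0 (dist x y)) :
    infDist (γ t) (gxp '' Icc 0 (dist x p)) ≤ 2 * δ ∨
      infDist (γ t) (gpq '' Icc 0 (dist p q)) ≤ 2 * δ ∨
      infDist (γ t) (gyq '' Icc 0 (dist y q)) ≤ 2 * δ := by
  -- cut along the diagonal `[q, x]`: the triangle `q x p` first, then the triangle `x y q`
  obtain ⟨gqx, hqx⟩ := hgeo q x
  let f z := min (infDist z (gxp '' Icc 0 (dist x p))) (infDist z (gpq '' Icc 0 (dist p q)))
  have hf : LipschitzWith 1 f := by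
    simpa using (lipschitz_infDist_pt _).min (lipschitz_infDist_pt _)
  have hqx_near (u : ℝ) (hu : u ∈ Icc 0 (dist q x)) : f (gqx u) ≤ δ := by
    simpa using hX.le_add_of_le_on_sides hf hqx hxp hpq (c := 0)
      (fun v hv => (min_le_left _ _).trans (infDist_zero_of_mem (mem_image_of_mem _ hv)).le)
      (fun v hv => (min_le_right _ _).trans (infDist_zero_of_mem (mem_image_of_mem _ hv)).le)
      hu
  have hf' : LipschitzWith 1 fun z => min (f z) (infDist z (gyq '' Icc 0 (dist y q))) := by
    simpa using hf.min (lipschitz_infDist_pt _)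
  have := hX.le_add_of_le_on_sides hf' hγ hyq hqx (c := δ)
    (fun v hv => (min_le_right _ _).trans
      ((infDist_zero_of_mem (mem_image_of_mem _ hv)).trans_le hδ))
    (fun v hv => (min_le_left _ _).trans (hqx_near v hv)) ht
  rw [← two_mul] at this
  simp only [f, min_le_iff] at this
  tauto

theorem exists_dist_le_of_closest (hX : SlimTriangles X δ) (hgeo : GeodesicSpace X)
    (hδ : 0 ≤ δ) {α β : ℝ → X} (hα : Isometry α) (hβ : Isometry β) {K : ℝ} (hK : 8 * δ < K)
    (hsep : ∀ s, K < infDist (α s) (range β)) {s₀ t₀ : ℝ}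
    (hclosest : ∀ s, dist (α s₀) (β t₀) ≤ dist (α s) (β t₀)) {x y : X}
    (hx : infDist x (range α) ≤ δ) (hy : infDist y (range β) ≤ δ) {γ : ℝ → X}
    (hγ : IsGeodFromTo γ x y) : ∃ t ∈ Icc 0 (dist x y), dist (γ t) (α s₀) ≤ 8 * δ := by
  obtain ⟨gxp, hxp⟩ := hgeo x (α s₀)
  obtain ⟨gpq, hpq⟩ := hgeo (α s₀) (β t₀)
  obtain ⟨gyq, hyq⟩ := hgeo y (β t₀)
  obtain ⟨t, ht, hnear_xp, hnear_pq⟩ := exists_infDist_le_of_cover dist_nonneg hγ.continuousOn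
    (fun t ht => hX.infDist_le_of_quadrilateral hgeo hδ hγ hxp hpq hyq ht)
    (by rw [hγ.1, infDist_zero_of_mem hxp.left_mem_image]; positivity)
    (by rw [hγ.2.1, infDist_zero_of_mem hyq.left_mem_image]; positivity)
    (fun w hw => by
      by_contra! hw'
      linarith [hX.infDist_range_le_add hgeo hα hxp w, hX.infDist_range_le_add hgeo hβ hyq w,
        le_infDist_add_infDist (range_nonempty α) (by rintro _ ⟨s, rfl⟩; exact (hsep s).le) w])
  refine ⟨t, ht, ?_⟩
  have hpq_closest : ∀ z ∈ gpq '' Icc 0 (dist (α s₀) (β t₀)),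
      dist z (α s₀) - infDist z (range α) ≤ 0 := by
    rintro _ ⟨r, hr, rfl⟩
    linarith [dist_le_infDist_of_forall_dist_le (range_nonempty α)
      (by rintro _ ⟨s, rfl⟩; exact hclosest s) (hpq.dist_add_dist hr)]
  have := ((LipschitzWith.dist_left (α s₀)).sub (lipschitz_infDist_pt _)).le_add_mul_infDist
    ⟨_, hpq.left_mem_image⟩ hpq_closest (γ t)
  push_cast at this
  linarith [hX.infDist_range_le_add hgeo hα hxp (γ t)]

end SlimTriangles

/-- "signposts": there are constants `K`, `R` depending only on `δ`
such that for geodesic lines `α`, `β` neither entering the `K`-neighborhood of the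
other, with `p ∈ α`, `q ∈ β` minimizing the distance between the lines, any geodesic
joining a point `x` within `δ` of `α` to a point `y` within `δ` of `β` passes within
`R` of both `p` and `q`. -/
theorem signposts (δ : ℝ) (hδ : 0 ≤ δ) :
    ∃ K R : ℝ, ∀ (X : Type) [MetricSpace X], GeodesicSpace X → SlimTriangles X δ →
      ∀ (α β : ℝ → X), Isometry α → Isometry β →
      (∀ s : ℝ, K < Metric.infDist (α s) (Set.range β)) →
      (∀ t : ℝ, K < Metric.infDist (β t) (Set.range α)) →
      ∀ (s₀ t₀ : ℝ), (∀ s t : ℝ, dist (α s₀) (β t₀) ≤ dist (α s) (β t)) →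
      ∀ x y : X, Metric.infDist x (Set.range α) ≤ δ →
        Metric.infDist y (Set.range β) ≤ δ →
      ∀ γ : ℝ → X, IsGeodFromTo γ x y →
        (∃ s ∈ Set.Icc (0:ℝ) (dist x y), dist (γ s) (α s₀) ≤ R) ∧
        (∃ s ∈ Set.Icc (0:ℝ) (dist x y), dist (γ s) (β t₀) ≤ R) := by
  refine ⟨8 * δ + 1, 8 * δ, fun X _ hgeo hX α β hα hβ hαβ hβα s₀ t₀ hmin x y hx hy γ hγ =>
    ⟨?_, ?_⟩⟩
  · exact hX.exists_dist_le_of_closest hgeo hδ hα hβ (by linarith) hαβ (fun s => hmin s t₀)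
      hx hy hγ
  · obtain ⟨t, ht, hdist⟩ := hX.exists_dist_le_of_closest hgeo hδ hβ hα (by linarith) hβα
      (fun t => by simpa only [dist_comm] using hmin s₀ t) hy hx hγ.reverse
    rw [dist_comm y x] at ht
    exact ⟨dist x y - t, ⟨by linarith [ht.2], by linarith [ht.1]⟩, hdist⟩
end
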